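/- Let K and L be pointed sets and let m : Γ × Γ → Γ denote the smash product functor on finite pointed sets (composed with an identification 𝐦 ∧ 𝐧 ≅ 𝐦𝐧). Then the left Kan extension of the functor (𝐚,𝐛) ↦ Map(𝐚,K) × Map(𝐛,L) along m is naturally isomorphic to the functor 𝐜 ↦ Map(𝐜, K ∧ L), where Map denotes based maps, viewed as contravariant functors on Γ (i.e. this is a Kan extension of functors Γᵒᵖ × Γᵒᵖ → Set along mᵒᵖ). -/

import Mathlib

/-- Morphisms `𝐧 → 𝐦` in the category `Γ` of finite pointed sets
`𝐧 = {0,…,n}` with basepoint `0`. -/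
def GHom (n m : ℕ) := {f : Fin (n + 1) → Fin (m + 1) // f 0 = 0}

/-- Composition in `Γ`. -/
def gcomp {c n m : ℕ} (γ : GHom c n) (δ : GHom n m) : GHom c m :=
  ⟨fun x => δ.1 (γ.1 x), by show δ.1 (γ.1 0) = 0; rw [γ.2, δ.2]⟩

/-- Based maps `𝐧 → X` into a pointed set `X`, i.e. the value at `𝐧` of the
contravariant functor `X^× : Γᵒᵖ → Set`, `𝐧 ↦ Map(𝐧, X)`. -/
def BMap (n : ℕ) (X : Type) [Inhabited X] := {f : Fin (n + 1) → X // f 0 = default}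

/-- Functoriality of `X^×`: precomposition of a based map with a `Γ`-morphism. -/
def pull {X : Type} [Inhabited X] {n m : ℕ} (α : GHom n m) (f : BMap m X) :
    BMap n X :=
  ⟨fun i => f.1 (α.1 i), by show f.1 (α.1 0) = default; rw [α.2, f.2]⟩

/-- The lexicographic identification `𝐚 ∧ 𝐛 ≅ 𝐚𝐛`: the non-basepoint pair
`(i, j)` goes to `(i-1)·b + j`, and degenerate pairs go to the basepoint. -/
def enc (a b : ℕ) (i : Fin (a + 1)) (j : Fin (b + 1)) : Fin (a * b + 1) :=
  if h : i.1 = 0 ∨ j.1 = 0 then 0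
  else
    ⟨(i.1 - 1) * b + j.1,
      Nat.lt_succ_of_le (by
        have hi := i.isLt
        have hj := j.isLt
        calc (i.1 - 1) * b + j.1 ≤ (a - 1) * b + b :=
              add_le_add (Nat.mul_le_mul_right _ (by omega)) (by omega)
          _ = (a - 1 + 1) * b := (Nat.succ_mul _ _).symm
          _ = a * b := by congr 1; omega)⟩

/-- The inverse of the lexicographic identification `𝐚 ∧ 𝐛 ≅ 𝐚𝐛`. -/
def dec (a b : ℕ) (c : Fin (a * b + 1)) : Fin (a + 1) × Fin (b + 1) :=
  if h : c.1 = 0 then (0, 0)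
  else
    have hc := c.isLt
    have hb : 0 < b := by
      rcases Nat.eq_zero_or_pos b with hb | hb
      · exfalso
        have h0 : a * b = 0 := by rw [hb, Nat.mul_zero]
        omega
      · exact hb
    (⟨(c.1 - 1) / b + 1,
        Nat.succ_lt_succ ((Nat.div_lt_iff_lt_mul hb).2
          (lt_of_lt_of_le (Nat.sub_lt (Nat.pos_of_ne_zero h) Nat.one_pos)
            (Nat.lt_succ_iff.1 hc)))⟩,
     ⟨(c.1 - 1) % b + 1, Nat.succ_lt_succ (Nat.mod_lt _ hb)⟩)

/-- The smash product functor `m : Γ × Γ → Γ` on morphisms, via the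
lexicographic identifications `𝐚 ∧ 𝐛 ≅ 𝐚𝐛`. -/
def mmap {a b a' b' : ℕ} (α : GHom a a') (β : GHom b b') : GHom (a * b) (a' * b') :=
  ⟨fun c => enc a' b' (α.1 (dec a b c).1) (β.1 (dec a b c).2), by
    simp [dec, enc, α.2, β.2]⟩

/-- The relation collapsing the wedge `K ∨ L ⊆ K × L` to a point. -/
def SmashRel (K L : Type) [Inhabited K] [Inhabited L] : K × L → K × L → Prop :=
  fun p q => (p.1 = default ∨ p.2 = default) ∧ (q.1 = default ∨ q.2 = default)

/-- The smash product of pointed sets. -/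
def Smash (K L : Type) [Inhabited K] [Inhabited L] := Quot (SmashRel K L)

instance (K L : Type) [Inhabited K] [Inhabited L] : Inhabited (Smash K L) :=
  ⟨Quot.mk _ (default, default)⟩

/-- The canonical cocone: for `γ : 𝐜 → 𝐚𝐛` in `Γ` and based maps `f : 𝐚 → K`,
`g : 𝐛 → L`, the based map `𝐜 → K ∧ L` given by `x ↦ f(i) ∧ g(j)` where
`γ(x) = (i,j)` under `𝐚𝐛 ≅ 𝐚 ∧ 𝐛`. -/
def usm (K L : Type) [Inhabited K] [Inhabited L] (c a b : ℕ)
    (γ : GHom c (a * b)) (p : BMap a K × BMap b L) : BMap c (Smash K L) :=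
  ⟨fun x => Quot.mk _ (p.1.1 (dec a b (γ.1 x)).1, p.2.1 (dec a b (γ.1 x)).2), by
    simp [γ.2, dec, p.1.2, p.2.2]
    rfl⟩

/-!
An element of the colimit over `(𝐜 ↓ m)` is represented by `(γ : 𝐜 → 𝐚𝐛, f, g)`, and the
morphism `(γ₁, γ₂) : (𝐜, 𝐜, Δ) → (𝐚, 𝐛, γ)` given by the two coordinates of `γ` identifies it
with the pair `(f ∘ γ₁, g ∘ γ₂)` of based maps on `𝐜` over the diagonal `Δ`. Over the diagonal,
a pair `(F, G)` is identified with the pair obtained by sending every `x` with `(F x, G x)` in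
the wedge `K ∨ L` to the basepoint: `F` is already trivial where `F` vanishes, `G` where `G`
vanishes, and `Δ` does not distinguish collapsing these two sets separately in the two factors
from collapsing their union in both. These normalized pairs are exactly the based maps
`𝐜 → K ∧ L`.
-/

section LexCoding

variable {a b : ℕ}

lemma enc_of_eq_zero {i : Fin (a + 1)} {j : Fin (b + 1)} (h : i = 0 ∨ j = 0) :
    enc a b i j = 0 := by
  rw [enc, dif_pos (by rwa [Fin.val_eq_zero_iff, Fin.val_eq_zero_iff])]

@[simp]
lemma dec_zero : dec a b 0 = (0, 0) := by simp [dec]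

lemma dec_enc {i : Fin (a + 1)} {j : Fin (b + 1)} (hi : i ≠ 0) (hj : j ≠ 0) :
    dec a b (enc a b i j) = (i, j) := by
  have hi' : i.1 ≠ 0 := Fin.val_ne_zero_iff.mpr hi
  have hj' : j.1 ≠ 0 := Fin.val_ne_zero_iff.mpr hj
  have hjb : j.1 - 1 < b := by omega
  have henc : (enc a b i j).1 = (i.1 - 1) * b + j.1 := by
    rw [enc, dif_neg (by tauto)]
  have hsub : (enc a b i j).1 - 1 = b * (i.1 - 1) + (j.1 - 1) := by
    rw [henc, Nat.mul_comm]; omega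
  rw [dec, dif_neg (by omega)]
  ext
  · simp only [hsub, Nat.mul_add_div (by omega : 0 < b), Nat.div_eq_of_lt hjb]; omega
  · simp only [hsub, Nat.mul_add_mod, Nat.mod_eq_of_lt hjb]; omega

lemma enc_dec (y : Fin (a * b + 1)) : enc a b (dec a b y).1 (dec a b y).2 = y := by
  by_cases hy : y.1 = 0
  · rw [show y = 0 from Fin.ext hy, dec_zero]
    exact enc_of_eq_zero (Or.inl rfl)
  · have hb : 0 < b := Nat.pos_of_ne_zero fun hb => hy (by subst hb; omega)
    rw [dec, dif_neg hy, enc, dif_neg (by simp)]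
    ext
    simp only [Nat.add_sub_cancel]
    have := Nat.div_add_mod (y.1 - 1) b
    rw [Nat.mul_comm] at this
    omega

lemma dec_enc_self (x : Fin (a + 1)) : dec a a (enc a a x x) = (x, x) := by
  by_cases hx : x = 0
  · rw [hx, enc_of_eq_zero (Or.inl rfl), dec_zero]
  · exact dec_enc hx hx

end LexCoding

section Gamma

variable {a b c : ℕ}

def gdiag (c : ℕ) : GHom c (c * c) := ⟨fun x => enc c c x x, enc_of_eq_zero (Or.inl rfl)⟩

lemma gcomp_gdiag_mmap_apply (α : GHom c a) (β : GHom c b) (x : Fin (c + 1)) :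
    (gcomp (gdiag c) (mmap α β)).1 x = enc a b (α.1 x) (β.1 x) := by
  simp only [gcomp, mmap, gdiag, dec_enc_self]

def decFst (γ : GHom c (a * b)) : GHom c a :=
  ⟨fun x => (dec a b (γ.1 x)).1, by simp [γ.2]⟩

def decSnd (γ : GHom c (a * b)) : GHom c b :=
  ⟨fun x => (dec a b (γ.1 x)).2, by simp [γ.2]⟩

lemma gcomp_gdiag_mmap_decFst_decSnd (γ : GHom c (a * b)) :
    gcomp (gdiag c) (mmap (decFst γ) (decSnd γ)) = γ :=
  Subtype.ext <| funext fun x => (gcomp_gdiag_mmap_apply _ _ x).trans (enc_dec _)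

open Classical in
noncomputable def collapse (S : Set (Fin (c + 1))) : GHom c c :=
  ⟨fun x => if x ∈ S then 0 else x, by dsimp only; split_ifs <;> rfl⟩

lemma pull_collapse_of_forall_mem {X : Type} [Inhabited X] {S : Set (Fin (c + 1))}
    {F : BMap c X} (hF : ∀ x ∈ S, F.1 x = default) : pull (collapse S) F = F := by
  refine Subtype.ext <| funext fun x => ?_
  simp only [pull, collapse]
  split_ifs with hx
  · rw [F.2, hF x hx]
  · rfl

lemma gcomp_gdiag_mmap_collapse (S T : Set (Fin (c + 1))) :
    gcomp (gdiag c) (mmap (collapse S) (collapse T)) =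
      gcomp (gdiag c) (mmap (collapse (S ∪ T)) (collapse (S ∪ T))) := by
  refine Subtype.ext <| funext fun x => ?_
  rw [gcomp_gdiag_mmap_apply, gcomp_gdiag_mmap_apply]
  by_cases hS : x ∈ S <;> by_cases hT : x ∈ T <;> simp [collapse, hS, hT, enc_of_eq_zero]

end Gamma

namespace Smash

variable {K L : Type} [Inhabited K] [Inhabited L]

lemma mk_eq_default {p : K × L} (hp : p.1 = default ∨ p.2 = default) :
    Quot.mk (SmashRel K L) p = default :=
  Quot.sound ⟨hp, Or.inl rfl⟩

open Classical in
noncomputable def rep : Smash K L → K × L :=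
  Quot.lift (fun p => if p.1 = default ∨ p.2 = default then (default, default) else p)
    fun _ _ h => by simp only [if_pos h.1, if_pos h.2]

open Classical in
lemma rep_mk (p : K × L) :
    rep (Quot.mk (SmashRel K L) p) =
      if p.1 = default ∨ p.2 = default then (default, default) else p :=
  rfl

lemma rep_default : rep (default : Smash K L) = (default, default) :=
  if_pos (Or.inl rfl)

lemma mk_rep (s : Smash K L) : Quot.mk (SmashRel K L) (rep s) = s := by
  induction s using Quot.ind with
  | mk p =>
    rw [rep_mk]
    split_ifs with hp
    · exact (mk_eq_default hp).symm
    · rfl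

end Smash

section SmashMaps

variable {K L : Type} [Inhabited K] [Inhabited L] {a b c : ℕ}

lemma mk_dec_enc (f : BMap a K) (g : BMap b L) (i : Fin (a + 1)) (j : Fin (b + 1)) :
    Quot.mk (SmashRel K L) (f.1 (dec a b (enc a b i j)).1, g.1 (dec a b (enc a b i j)).2) =
      Quot.mk (SmashRel K L) (f.1 i, g.1 j) := by
  by_cases hij : i = 0 ∨ j = 0
  · rw [enc_of_eq_zero hij, dec_zero, f.2, g.2, Smash.mk_eq_default (Or.inl rfl)]
    refine (Smash.mk_eq_default ?_).symm
    rcases hij with rfl | rfl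
    · exact Or.inl f.2
    · exact Or.inr g.2
  · obtain ⟨hi, hj⟩ := not_or.mp hij
    rw [dec_enc hi hj]

def wedgePreimage (F : BMap c K) (G : BMap c L) : Set (Fin (c + 1)) :=
  {x | F.1 x = default ∨ G.1 x = default}

noncomputable def smashFst (h : BMap c (Smash K L)) : BMap c K :=
  ⟨fun x => (Smash.rep (h.1 x)).1, by
    show (Smash.rep (h.1 0)).1 = default; rw [h.2, Smash.rep_default]⟩

noncomputable def smashSnd (h : BMap c (Smash K L)) : BMap c L :=
  ⟨fun x => (Smash.rep (h.1 x)).2, by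
    show (Smash.rep (h.1 0)).2 = default; rw [h.2, Smash.rep_default]⟩

lemma usm_gdiag_smashFst_smashSnd (h : BMap c (Smash K L)) :
    usm K L c c c (gdiag c) (smashFst h, smashSnd h) = h :=
  Subtype.ext <| funext fun x => by
    simp only [usm, gdiag, dec_enc_self, smashFst, smashSnd, Prod.mk.eta, Smash.mk_rep]

lemma smashFst_usm_gdiag (F : BMap c K) (G : BMap c L) :
    smashFst (usm K L c c c (gdiag c) (F, G)) = pull (collapse (wedgePreimage F G)) F := by
  refine Subtype.ext <| funext fun x => ?_
  by_cases hx : F.1 x = default ∨ G.1 x = default <;>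
    simp [smashFst, usm, gdiag, dec_enc_self, Smash.rep_mk, pull, collapse, wedgePreimage, hx,
      F.2]

lemma smashSnd_usm_gdiag (F : BMap c K) (G : BMap c L) :
    smashSnd (usm K L c c c (gdiag c) (F, G)) = pull (collapse (wedgePreimage F G)) G := by
  refine Subtype.ext <| funext fun x => ?_
  by_cases hx : F.1 x = default ∨ G.1 x = default <;>
    simp [smashSnd, usm, gdiag, dec_enc_self, Smash.rep_mk, pull, collapse, wedgePreimage, hx,
      G.2]

end SmashMaps

section Cocone

variable (K L : Type) [Inhabited K] [Inhabited L] (c : ℕ) {Z : Type}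

/-- `v` is a cocone on `(𝐚, 𝐛, γ : 𝐜 → 𝐚𝐛) ↦ Map(𝐚, K) × Map(𝐛, L)` over the comma category
`(𝐜 ↓ m)`. -/
def IsSmashCocone (v : ∀ a b : ℕ, GHom c (a * b) → BMap a K × BMap b L → Z) : Prop :=
  ∀ (a b a' b' : ℕ) (α : GHom a a') (β : GHom b b') (γ : GHom c (a * b))
    (f : BMap a' K) (g : BMap b' L),
    v a b γ (pull α f, pull β g) = v a' b' (gcomp γ (mmap α β)) (f, g)

variable {K L c}

lemma usm_isSmashCocone : IsSmashCocone K L c (usm K L c) :=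
  fun _ _ _ _ _ _ _ f g => Subtype.ext <| funext fun _ => (mk_dec_enc f g _ _).symm

namespace IsSmashCocone

variable {v : ∀ a b : ℕ, GHom c (a * b) → BMap a K × BMap b L → Z}
  (hv : IsSmashCocone K L c v)
include hv

lemma eq_gdiag {a b : ℕ} (γ : GHom c (a * b)) (f : BMap a K) (g : BMap b L) :
    v a b γ (f, g) = v c c (gdiag c) (pull (decFst γ) f, pull (decSnd γ) g) := by
  rw [hv, gcomp_gdiag_mmap_decFst_decSnd]

lemma gdiag_eq_collapse (F : BMap c K) (G : BMap c L) :
    v c c (gdiag c) (F, G) =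
      v c c (gdiag c) (pull (collapse (wedgePreimage F G)) F,
        pull (collapse (wedgePreimage F G)) G) := by
  set S : Set (Fin (c + 1)) := {x | F.1 x = default}
  set T : Set (Fin (c + 1)) := {x | G.1 x = default}
  calc v c c (gdiag c) (F, G)
      = v c c (gdiag c) (pull (collapse S) F, pull (collapse T) G) := by
        rw [pull_collapse_of_forall_mem (S := S) (fun _ hx => hx),
          pull_collapse_of_forall_mem (S := T) (fun _ hx => hx)]
    _ = v c c (gdiag c) (pull (collapse (S ∪ T)) F, pull (collapse (S ∪ T)) G) := by
        rw [hv, hv, gcomp_gdiag_mmap_collapse]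

lemma eq_gdiag_smashFst_smashSnd (a b : ℕ) (γ : GHom c (a * b))
    (p : BMap a K × BMap b L) :
    v a b γ p = v c c (gdiag c)
      (smashFst (usm K L c a b γ p), smashSnd (usm K L c a b γ p)) := by
  obtain ⟨f, g⟩ := p
  rw [hv.eq_gdiag, usm_isSmashCocone.eq_gdiag, hv.gdiag_eq_collapse, smashFst_usm_gdiag,
    smashSnd_usm_gdiag]

end IsSmashCocone

end Cocone

/-- The value at `𝐜` of the left Kan extension is the colimit over `(𝐜 ↓ m)`; the two conjuncts
say that `usm` is a colimit cocone. -/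
theorem lan_smash (K L : Type) [Inhabited K] [Inhabited L] (c : ℕ) :
    (∀ (a b a' b' : ℕ) (α : GHom a a') (β : GHom b b') (γ : GHom c (a * b))
        (f : BMap a' K) (g : BMap b' L),
        usm K L c a b γ (pull α f, pull β g) =
          usm K L c a' b' (gcomp γ (mmap α β)) (f, g)) ∧
    (∀ (Z : Type) (v : ∀ a b : ℕ, GHom c (a * b) → BMap a K × BMap b L → Z),
      (∀ (a b a' b' : ℕ) (α : GHom a a') (β : GHom b b') (γ : GHom c (a * b))
          (f : BMap a' K) (g : BMap b' L),
          v a b γ (pull α f, pull β g) = v a' b' (gcomp γ (mmap α β)) (f, g)) →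
      ∃! w : BMap c (Smash K L) → Z,
        ∀ (a b : ℕ) (γ : GHom c (a * b)) (p : BMap a K × BMap b L),
          v a b γ p = w (usm K L c a b γ p)) := by
  refine ⟨usm_isSmashCocone, fun Z v hv => ⟨fun h => v c c (gdiag c) (smashFst h, smashSnd h),
    IsSmashCocone.eq_gdiag_smashFst_smashSnd hv, fun w hw => funext fun h => ?_⟩⟩
  rw [hw, usm_gdiag_smashFst_smashSnd]
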